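/- For any two probability measures P, Q on the same measurable space and any binary test (measurable event) A, the average error satisfies P(Aᶜ) + Q(A) ≥ (1/2)·exp(−KL(P ‖ Q)) (Bretagnolle–Huber inequality); consequently, if KL(P‖Q) ≤ 2ρε²n/(m−ε)², any test distinguishing P from Q errs with probability at least (1/4)·exp(−2ρε²n/(m−ε)²) under the mixture (P+Q)/2. -/

import Mathlib

open MeasureTheory

noncomputable def klDiv {α : Type*} [MeasurableSpace α] (μ ν : Measure α) : ℝ :=
  ∫ x, Real.log ((μ.rnDeriv ν x).toReal) ∂μ

/-!
With the Bhattacharyya coefficient `B = ∫ √(dP/dQ) dQ`, Cauchy–Schwarz on `A` and on `Aᶜ` gives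
`B ≤ √Q(A) + √P(Aᶜ)`, hence `B² ≤ 2 (P(Aᶜ) + Q(A))`. On the other side, `B = ∫ (dP/dQ)^(-1/2) dP`,
so Jensen's inequality for `exp` under `P` gives `exp (-KL(P ‖ Q) / 2) ≤ B`. The bound under the
packing hypothesis on `KL(P ‖ Q)` then follows by monotonicity of `exp`.
-/

open Set Real
open scoped ENNReal

theorem exp_integral_le_integral_exp {α : Type*} [MeasurableSpace α] {μ : Measure α}
    [IsProbabilityMeasure μ] {f : α → ℝ} (hf : Integrable f μ)
    (hexp : Integrable (fun x => exp (f x)) μ) :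
    exp (∫ x, f x ∂μ) ≤ ∫ x, exp (f x) ∂μ :=
  convexOn_exp.map_integral_le continuous_exp.continuousOn isClosed_univ
    (ae_of_all _ fun _ => mem_univ _) hf hexp

namespace MeasureTheory.Measure

variable {α : Type*} [MeasurableSpace α] {μ ν : Measure α}

noncomputable def bhattacharyya (μ ν : Measure α) : ℝ≥0∞ :=
  ∫⁻ x, μ.rnDeriv ν x ^ (1 / 2 : ℝ) ∂ν

lemma setLIntegral_rnDeriv_rpow_half_le [μ.HaveLebesgueDecomposition ν] [SFinite ν]
    (hμν : μ ≪ ν) (s : Set α) :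
    ∫⁻ x in s, μ.rnDeriv ν x ^ (1 / 2 : ℝ) ∂ν ≤ μ s ^ (1 / 2 : ℝ) * ν s ^ (1 / 2 : ℝ) := by
  have holder := ENNReal.lintegral_mul_le_Lp_mul_Lq (ν.restrict s) Real.HolderConjugate.two_two
    ((measurable_rnDeriv μ ν).pow_const (1 / 2 : ℝ)).aemeasurable (aemeasurable_const (b := 1))
  have hsq : ∀ x, (μ.rnDeriv ν x ^ (1 / 2 : ℝ)) ^ (2 : ℝ) = μ.rnDeriv ν x := fun x => by
    rw [← ENNReal.rpow_mul]; norm_num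
  simpa only [Pi.mul_apply, mul_one, hsq, setLIntegral_rnDeriv hμν, ENNReal.one_rpow,
    setLIntegral_const, one_mul] using holder

lemma bhattacharyya_le_one [IsProbabilityMeasure μ] [IsProbabilityMeasure ν] (hμν : μ ≪ ν) :
    bhattacharyya μ ν ≤ 1 := by
  simpa [bhattacharyya] using setLIntegral_rnDeriv_rpow_half_le hμν univ

lemma bhattacharyya_le_rpow_half_add [IsProbabilityMeasure μ] [IsProbabilityMeasure ν]
    (hμν : μ ≪ ν) {A : Set α} (hA : MeasurableSet A) :
    bhattacharyya μ ν ≤ ν A ^ (1 / 2 : ℝ) + μ Aᶜ ^ (1 / 2 : ℝ) := by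
  have hle_one : ∀ s, μ s ^ (1 / 2 : ℝ) ≤ 1 ∧ ν s ^ (1 / 2 : ℝ) ≤ 1 := fun s =>
    ⟨ENNReal.rpow_le_one prob_le_one (by norm_num),
      ENNReal.rpow_le_one prob_le_one (by norm_num)⟩
  rw [bhattacharyya, ← lintegral_add_compl _ hA]
  gcongr
  · calc _ ≤ μ A ^ (1 / 2 : ℝ) * ν A ^ (1 / 2 : ℝ) := setLIntegral_rnDeriv_rpow_half_le hμν A
      _ ≤ ν A ^ (1 / 2 : ℝ) := mul_le_of_le_one_left' (hle_one A).1
  · calc _ ≤ μ Aᶜ ^ (1 / 2 : ℝ) * ν Aᶜ ^ (1 / 2 : ℝ) := setLIntegral_rnDeriv_rpow_half_le hμν Aᶜ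
      _ ≤ μ Aᶜ ^ (1 / 2 : ℝ) := mul_le_of_le_one_right' (hle_one Aᶜ).2

lemma lintegral_rnDeriv_rpow_neg_half [μ.HaveLebesgueDecomposition ν] [SigmaFinite μ]
    (hμν : μ ≪ ν) :
    ∫⁻ x, μ.rnDeriv ν x ^ (-(1 / 2) : ℝ) ∂μ = bhattacharyya μ ν := by
  rw [← lintegral_rnDeriv_mul hμν ((measurable_rnDeriv μ ν).pow_const _).aemeasurable]
  refine lintegral_congr_ae ?_
  filter_upwards [rnDeriv_ne_top μ ν] with x hx_top
  rcases eq_or_ne (μ.rnDeriv ν x) 0 with hx0 | hx0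
  · simp [hx0]
  · have hsplit := ENNReal.rpow_add 1 (-(1 / 2)) hx0 hx_top
    rw [ENNReal.rpow_one] at hsplit
    rw [← hsplit]
    norm_num

lemma exp_neg_klDiv_le_bhattacharyya_sq [IsProbabilityMeasure μ] [IsProbabilityMeasure ν]
    (hμν : μ ≪ ν) (hint : Integrable (fun x => log (μ.rnDeriv ν x).toReal) μ) :
    exp (-klDiv μ ν) ≤ (bhattacharyya μ ν).toReal ^ 2 := by
  set g : α → ℝ≥0∞ := fun x => μ.rnDeriv ν x ^ (-(1 / 2) : ℝ)
  have hg_meas : AEMeasurable g μ := ((measurable_rnDeriv μ ν).pow_const _).aemeasurable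
  have hg_lintegral : ∫⁻ x, g x ∂μ = bhattacharyya μ ν := lintegral_rnDeriv_rpow_neg_half hμν
  have hg_ne_top : ∫⁻ x, g x ∂μ ≠ ∞ :=
    hg_lintegral ▸ ((bhattacharyya_le_one hμν).trans_lt ENNReal.one_lt_top).ne
  have hexp_eq : (fun x => exp (-(1 / 2) * log (μ.rnDeriv ν x).toReal)) =ᵐ[μ]
      fun x => (g x).toReal := by
    filter_upwards [rnDeriv_pos hμν, hμν.ae_le (rnDeriv_lt_top μ ν)] with x hpos hlt
    rw [← ENNReal.toReal_rpow, rpow_def_of_pos (ENNReal.toReal_pos hpos.ne' hlt.ne), mul_comm]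
  have hjensen := exp_integral_le_integral_exp (hint.const_mul (-(1 / 2)))
    ((integrable_toReal_of_lintegral_ne_top hg_meas hg_ne_top).congr hexp_eq.symm)
  rw [integral_const_mul, integral_congr_ae hexp_eq, integral_toReal hg_meas
    (ae_lt_top' hg_meas hg_ne_top), hg_lintegral] at hjensen
  calc exp (-klDiv μ ν) = exp (-(1 / 2) * klDiv μ ν) ^ 2 := by rw [← exp_nat_mul]; ring_nf
    _ ≤ (bhattacharyya μ ν).toReal ^ 2 := pow_le_pow_left₀ (exp_pos _).le hjensen 2

theorem bretagnolle_huber [IsProbabilityMeasure μ] [IsProbabilityMeasure ν] (hμν : μ ≪ ν)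
    (hint : Integrable (fun x => log (μ.rnDeriv ν x).toReal) μ) {A : Set α}
    (hA : MeasurableSet A) :
    1 / 2 * exp (-klDiv μ ν) ≤ (μ Aᶜ).toReal + (ν A).toReal := by
  have hB : (bhattacharyya μ ν).toReal ≤ √(ν A).toReal + √(μ Aᶜ).toReal := by
    have h := ENNReal.toReal_mono (by finiteness) (bhattacharyya_le_rpow_half_add hμν hA)
    rwa [ENNReal.toReal_add (by finiteness) (by finiteness), ← ENNReal.toReal_rpow,
      ← ENNReal.toReal_rpow, ← sqrt_eq_rpow, ← sqrt_eq_rpow] at h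
  calc 1 / 2 * exp (-klDiv μ ν) ≤ 1 / 2 * (√(ν A).toReal + √(μ Aᶜ).toReal) ^ 2 := by
        gcongr
        exact (exp_neg_klDiv_le_bhattacharyya_sq hμν hint).trans (by gcongr)
    _ ≤ 1 / 2 * (2 * (√(ν A).toReal ^ 2 + √(μ Aᶜ).toReal ^ 2)) := by gcongr; exact add_sq_le
    _ = (μ Aᶜ).toReal + (ν A).toReal := by
        rw [sq_sqrt ENNReal.toReal_nonneg, sq_sqrt ENNReal.toReal_nonneg]; ring

end MeasureTheory.Measure

theorem stmt_19 {α : Type*} [MeasurableSpace α]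
    (P Q : Measure α) [IsProbabilityMeasure P] [IsProbabilityMeasure Q]
    (hac : P ≪ Q)
    (hint : Integrable (fun x => Real.log ((P.rnDeriv Q x).toReal)) P)
    (A : Set α) (hA : MeasurableSet A) :
    (1 / 2) * Real.exp (-(klDiv P Q)) ≤ (P Aᶜ).toReal + (Q A).toReal ∧
    (∀ ρ ε m : ℝ, ∀ n : ℕ, 0 < ρ → ρ < 1 → 0 < ε → ε < m →
      klDiv P Q ≤ 2 * ρ * ε ^ 2 * n / (m - ε) ^ 2 →
      (1 / 4) * Real.exp (-(2 * ρ * ε ^ 2 * n / (m - ε) ^ 2)) ≤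
        (1 / 2) * ((P Aᶜ).toReal + (Q A).toReal)) := by
  have hbh := Measure.bretagnolle_huber hac hint hA
  refine ⟨hbh, fun ρ ε m n _ _ _ _ hkl => ?_⟩
  have hexp : exp (-(2 * ρ * ε ^ 2 * n / (m - ε) ^ 2)) ≤ exp (-klDiv P Q) := by gcongr
  linarith
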